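/- (Linear independence of Gaussian mean-derivatives.) Let k ≥ 1 and let (b_1, ν_1),…,(b_k, ν_k) ∈ ℝ × ℝ_{>0} be pairwise distinct pairs. Let N_1,…,N_k be natural numbers and let ξ_{j,ω} ∈ ℝ for j ∈ [k], 0 ≤ ω ≤ N_j. If Σ_{j=1}^{k} Σ_{ω=0}^{N_j} ξ_{j,ω} · (∂^ω φ/∂b^ω)(y; b_j, ν_j) = 0 for Lebesgue-almost every y ∈ ℝ, then ξ_{j,ω} = 0 for all j and ω. Here (∂^ω φ/∂b^ω)(y; b_j, ν_j) denotes the ω-th derivative of the map b ↦ φ(y; b, ν_j) evaluated at b = b_j. -/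

import Mathlib

/-- The univariate Gaussian density with mean `b` and variance `ν`:
`φ(y; b, ν) = (2πν)^(-1/2) exp(−(y−b)²/(2ν))`. -/
noncomputable def gauss1 (y b ν : ℝ) : ℝ :=
  (2 * Real.pi * ν) ^ (-(1 : ℝ) / 2) * Real.exp (-((y - b) ^ 2) / (2 * ν))

/-!
Writing `φ(y; b, ν) = c · exp(-y²/(2ν) + b y/ν)` with `c > 0`, the `ω`-th mean-derivative is
`Hω(y - b) φ(y; b, ν)` for a polynomial `Hω` of degree exactly `ω`. A vanishing combination thus
becomes `Σⱼ Rⱼ(y) exp(-αⱼ y² + βⱼ y) = 0` with distinct exponents `(αⱼ, βⱼ)` and polynomials `Rⱼ`.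
Dividing by the term with smallest `α` (and among those the largest `β`), every other term tends
to `0` as `y → ∞`, so the dominant polynomial tends to `0` and must vanish; induction removes
the terms one by one. Finally each `Σ_ω ξⱼω Hω` vanishes, and the `Hω` are linearly independent
since their degrees are distinct.
-/

open Polynomial Filter Topology

/-- `gauss1DerivPoly ν n` is the probabilists' Hermite polynomial `Heₙ` rescaled to variance `ν`:
`∂ⁿφ/∂bⁿ (y; b, ν) = (gauss1DerivPoly ν n).eval (y - b) * φ(y; b, ν)`. -/
noncomputable def gauss1DerivPoly (ν : ℝ) : ℕ → ℝ[X]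
  | 0 => 1
  | n + 1 => C ν⁻¹ * X * gauss1DerivPoly ν n - derivative (gauss1DerivPoly ν n)

lemma natDegree_gauss1DerivPoly_le (ν : ℝ) (n : ℕ) : (gauss1DerivPoly ν n).natDegree ≤ n := by
  induction n with
  | zero => simp [gauss1DerivPoly]
  | succ n ih =>
    rw [gauss1DerivPoly]
    refine (natDegree_sub_le _ _).trans (max_le ?_ ?_)
    · refine natDegree_mul_le.trans ?_
      have : (C ν⁻¹ * X).natDegree ≤ 1 := natDegree_mul_le.trans (by simp)
      omega
    · have := natDegree_derivative_le (gauss1DerivPoly ν n)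
      omega

lemma coeff_gauss1DerivPoly_self (ν : ℝ) (n : ℕ) : (gauss1DerivPoly ν n).coeff n = ν⁻¹ ^ n := by
  induction n with
  | zero => simp [gauss1DerivPoly]
  | succ n ih =>
    have hderiv : (derivative (gauss1DerivPoly ν n)).coeff (n + 1) = 0 :=
      coeff_eq_zero_of_natDegree_lt <| (natDegree_derivative_le _).trans_lt <| by
        have := natDegree_gauss1DerivPoly_le ν n
        omega
    rw [gauss1DerivPoly, coeff_sub, hderiv, mul_assoc, mul_comm X, ← mul_assoc, coeff_mul_X,
      coeff_C_mul, ih, pow_succ]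
    ring

lemma degree_gauss1DerivPoly {ν : ℝ} (hν : ν ≠ 0) (n : ℕ) : (gauss1DerivPoly ν n).degree = n :=
  degree_eq_of_le_of_coeff_ne_zero (degree_le_of_natDegree_le (natDegree_gauss1DerivPoly_le ν n))
    (by simp [coeff_gauss1DerivPoly_self, hν])

lemma eq_zero_of_sum_smul_gauss1DerivPoly_eq_zero {ν : ℝ} (hν : ν ≠ 0) {N : ℕ} {ξ : ℕ → ℝ}
    (h : ∑ ω ∈ Finset.range (N + 1), ξ ω • gauss1DerivPoly ν ω = 0) : ∀ ω ≤ N, ξ ω = 0 :=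
  fun ω hω => linearIndependent_iff'.mp
    (⟨gauss1DerivPoly ν, degree_gauss1DerivPoly hν⟩ : Sequence ℝ).linearIndependent _ ξ h ω
    (Finset.mem_range_succ_iff.mpr hω)

lemma hasDerivAt_gauss1_mean (y b ν : ℝ) (hν : ν ≠ 0) :
    HasDerivAt (fun b' => gauss1 y b' ν) ((y - b) / ν * gauss1 y b ν) b := by
  have hexponent : HasDerivAt (fun b' : ℝ => -((y - b') ^ 2) / (2 * ν)) ((y - b) / ν) b := by
    refine ((((hasDerivAt_id' b).const_sub y).fun_pow 2).fun_neg.div_const (2 * ν)).congr_deriv ?_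
    field_simp
    ring
  refine (hexponent.exp.const_mul ((2 * Real.pi * ν) ^ (-(1 : ℝ) / 2))).congr_deriv ?_
  rw [gauss1]
  ring

lemma iteratedDeriv_gauss1_mean (y ν : ℝ) (hν : ν ≠ 0) (n : ℕ) (b : ℝ) :
    iteratedDeriv n (fun b' => gauss1 y b' ν) b =
      (gauss1DerivPoly ν n).eval (y - b) * gauss1 y b ν := by
  induction n generalizing b with
  | zero => simp [gauss1DerivPoly]
  | succ n ih =>
    have hpoly : HasDerivAt (fun b' : ℝ => (gauss1DerivPoly ν n).eval (y - b'))
        (-(derivative (gauss1DerivPoly ν n)).eval (y - b)) b := by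
      simpa [Function.comp_def] using
        ((gauss1DerivPoly ν n).hasDerivAt (y - b)).comp b ((hasDerivAt_id b).const_sub y)
    rw [iteratedDeriv_succ, funext ih, (hpoly.fun_mul (hasDerivAt_gauss1_mean y b ν hν)).deriv,
      gauss1DerivPoly]
    simp only [eval_sub, eval_mul, eval_C, eval_X]
    ring

lemma sum_smul_iteratedDeriv_gauss1_mean (y b ν : ℝ) (hν : ν ≠ 0) (N : ℕ) (ξ : ℕ → ℝ) :
    ∑ ω ∈ Finset.range (N + 1), ξ ω * iteratedDeriv ω (fun b' => gauss1 y b' ν) b =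
      (∑ ω ∈ Finset.range (N + 1), ξ ω • gauss1DerivPoly ν ω).eval (y - b) * gauss1 y b ν := by
  simp only [iteratedDeriv_gauss1_mean y ν hν, eval_finsetSum, eval_smul, smul_eq_mul,
    Finset.sum_mul, mul_assoc]

lemma continuous_gauss1 (b ν : ℝ) : Continuous (fun y => gauss1 y b ν) := by
  unfold gauss1
  fun_prop

lemma gauss1_eq_mul_exp (y b ν : ℝ) (hν : ν ≠ 0) :
    gauss1 y b ν = (2 * Real.pi * ν) ^ (-(1 : ℝ) / 2) * Real.exp (-(b ^ 2) / (2 * ν)) *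
      Real.exp (-(2 * ν)⁻¹ * y ^ 2 + b / ν * y) := by
  rw [gauss1, mul_assoc _ (Real.exp _), ← Real.exp_add]
  congr 2
  field_simp
  ring

lemma tendsto_eval_mul_exp_neg_mul_atTop (p : ℝ[X]) {c : ℝ} (hc : 0 < c) :
    Tendsto (fun y => p.eval y * Real.exp (-c * y)) atTop (𝓝 0) := by
  convert (p.comp (C c⁻¹ * X)).tendsto_div_exp_atTop.comp (tendsto_id.const_mul_atTop hc)
    using 2 with y
  simp [inv_mul_cancel_left₀ hc.ne', div_eq_mul_inv, ← Real.exp_neg]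

lemma tendsto_eval_mul_exp_quadratic_atTop (p : ℝ[X]) {a b : ℝ} (h : 0 < a ∨ a = 0 ∧ b < 0) :
    Tendsto (fun y => p.eval y * Real.exp (-a * y ^ 2 + b * y)) atTop (𝓝 0) := by
  rcases h with ha | ⟨rfl, hb⟩
  · refine squeeze_zero_norm' ?_
      (by simpa using (tendsto_eval_mul_exp_neg_mul_atTop p one_pos).norm)
    filter_upwards [eventually_ge_atTop ((b + 1) / a), eventually_ge_atTop 0] with y hy hy0
    have hay : b + 1 ≤ a * y := by rwa [div_le_iff₀' ha] at hy
    rw [norm_mul, Real.norm_eq_abs, Real.norm_of_nonneg (Real.exp_pos _).le]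
    gcongr
    nlinarith
  · simpa using tendsto_eval_mul_exp_neg_mul_atTop p (neg_pos.mpr hb)

lemma eq_zero_of_tendsto_eval_atTop_zero {p : ℝ[X]}
    (h : Tendsto (fun y => p.eval y) atTop (𝓝 0)) : p = 0 :=
  leadingCoeff_eq_zero.mp ((Polynomial.tendsto_nhds_iff p).mp h).1

theorem eq_zero_of_forall_sum_eval_mul_exp_eq_zero {ι : Type*} (α β : ι → ℝ) (R : ι → ℝ[X])
    (s : Finset ι) (hinj : Set.InjOn (fun j => (α j, β j)) s)
    (hsum : ∀ y, ∑ j ∈ s, (R j).eval y * Real.exp (-α j * y ^ 2 + β j * y) = 0) :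
    ∀ j ∈ s, R j = 0 := by
  classical
  induction s using Finset.induction_on_max_value (fun j => toLex (-α j, β j)) with
  | empty => simp
  | insert a s has hmax ih =>
    have hdecay : ∀ j ∈ s, 0 < α j - α a ∨ α j - α a = 0 ∧ β j - β a < 0 := by
      intro j hj
      have hne : (α j, β j) ≠ (α a, β a) :=
        fun heq => has (hinj (by simp [hj]) (by simp) heq ▸ hj)
      rcases Prod.Lex.lt_iff.mp (lt_of_le_of_ne (hmax j hj) (by simpa using hne)) with h | ⟨h, h'⟩
      · simp only [ofLex_toLex] at h
        exact Or.inl (by linarith)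
      · simp only [ofLex_toLex, neg_inj] at h h'
        exact Or.inr ⟨by linarith, by linarith⟩
    have hrest : Tendsto (fun y => ∑ j ∈ s,
        (R j).eval y * Real.exp (-(α j - α a) * y ^ 2 + (β j - β a) * y)) atTop (𝓝 0) := by
      simpa using tendsto_finsetSum s fun j hj =>
        tendsto_eval_mul_exp_quadratic_atTop (R j) (hdecay j hj)
    have hsplit : ∀ y, (R a).eval y = -∑ j ∈ s,
        (R j).eval y * Real.exp (-(α j - α a) * y ^ 2 + (β j - β a) * y) := by
      intro y
      have hshift : ∀ j, Real.exp (-(α j - α a) * y ^ 2 + (β j - β a) * y) *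
          Real.exp (-α a * y ^ 2 + β a * y) = Real.exp (-α j * y ^ 2 + β j * y) := fun j => by
        rw [← Real.exp_add]
        ring_nf
      have h := hsum y
      rw [Finset.sum_insert has] at h
      refine mul_right_cancel₀ (Real.exp_pos (-α a * y ^ 2 + β a * y)).ne' ?_
      simp only [neg_mul (Finset.sum _ _), Finset.sum_mul, mul_assoc, hshift]
      linarith
    have hRa : R a = 0 := eq_zero_of_tendsto_eval_atTop_zero (by simpa [hsplit] using hrest.neg)
    have hsum' : ∀ y, ∑ j ∈ s, (R j).eval y * Real.exp (-α j * y ^ 2 + β j * y) = 0 := by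
      simpa [Finset.sum_insert has, hRa] using hsum
    intro j hj
    rcases Finset.mem_insert.mp hj with rfl | hj
    · exact hRa
    · exact ih (hinj.mono (by simp)) hsum' j hj

lemma injOn_gauss1_exponents {ι : Type*} {b ν : ι → ℝ} (hν : ∀ j, 0 < ν j)
    (hinj : Function.Injective fun j => (b j, ν j)) (s : Set ι) :
    s.InjOn fun j => ((2 * ν j)⁻¹, b j / ν j) := by
  intro i _ j _ hij
  obtain ⟨hα, hβ⟩ := Prod.ext_iff.mp hij
  have hνij : ν i = ν j := by simpa using hα
  simp only [hνij, div_left_inj' (hν j).ne'] at hβ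
  exact hinj (Prod.ext hβ hνij)

theorem eq_zero_of_forall_sum_eval_sub_mul_gauss1_eq_zero {ι : Type*} [Fintype ι] (b ν : ι → ℝ)
    (hν : ∀ j, 0 < ν j) (hinj : Function.Injective fun j => (b j, ν j)) (Q : ι → ℝ[X])
    (h : ∀ y, ∑ j, (Q j).eval (y - b j) * gauss1 y (b j) (ν j) = 0) : ∀ j, Q j = 0 := by
  set c : ι → ℝ := fun j =>
    (2 * Real.pi * ν j) ^ (-(1 : ℝ) / 2) * Real.exp (-(b j ^ 2) / (2 * ν j))
  have hc : ∀ j, c j ≠ 0 := fun j =>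
    mul_ne_zero (Real.rpow_pos_of_pos (by have := hν j; positivity) _).ne' (Real.exp_pos _).ne'
  have hR := eq_zero_of_forall_sum_eval_mul_exp_eq_zero (fun j => (2 * ν j)⁻¹) (fun j => b j / ν j)
    (fun j => C (c j) * (Q j).comp (X - C (b j))) Finset.univ (injOn_gauss1_exponents hν hinj _)
    fun y => by
      simpa [gauss1_eq_mul_exp _ _ _ (hν _).ne', c, mul_assoc, mul_comm, mul_left_comm] using h y
  refine fun j => Polynomial.funext fun u => ?_
  simpa [hc j] using congrArg (eval (u + b j)) (hR j (Finset.mem_univ j))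

open MeasureTheory in
theorem gaussian_derivatives_linear_independent_general
    (k : ℕ) (bm : Fin k → ℝ) (ν : Fin k → ℝ) (hν : ∀ j, 0 < ν j)
    (hdist : Function.Injective (fun j => (bm j, ν j)))
    (N : Fin k → ℕ) (ξ : Fin k → ℕ → ℝ)
    (h : ∀ᵐ y : ℝ,
      ∑ j : Fin k, ∑ ω ∈ Finset.range (N j + 1),
        ξ j ω * iteratedDeriv ω (fun b' => gauss1 y b' (ν j)) (bm j) = 0) :
    ∀ j : Fin k, ∀ ω ≤ N j, ξ j ω = 0 := by
  set Q : Fin k → ℝ[X] := fun j => ∑ ω ∈ Finset.range (N j + 1), ξ j ω • gauss1DerivPoly (ν j) ω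
  have hQ : ∀ y, ∑ j, ∑ ω ∈ Finset.range (N j + 1),
      ξ j ω * iteratedDeriv ω (fun b' => gauss1 y b' (ν j)) (bm j) =
        ∑ j, (Q j).eval (y - bm j) * gauss1 y (bm j) (ν j) := fun y =>
    Finset.sum_congr rfl fun j _ =>
      sum_smul_iteratedDeriv_gauss1_mean y (bm j) (ν j) (hν j).ne' (N j) (ξ j)
  have hzero : (fun y => ∑ j, (Q j).eval (y - bm j) * gauss1 y (bm j) (ν j)) = 0 := by
    refine (Continuous.ae_eq_iff_eq volume ?_ continuous_zero).mp ?_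
    · exact continuous_finsetSum _ fun j _ =>
        ((Q j).continuous.comp (continuous_sub_right _)).mul (continuous_gauss1 _ _)
    · filter_upwards [h] with y hy
      rw [← hQ, hy, Pi.zero_apply]
  intro j
  exact eq_zero_of_sum_smul_gauss1DerivPoly_eq_zero (hν j).ne'
    (eq_zero_of_forall_sum_eval_sub_mul_gauss1_eq_zero bm ν hν hdist Q (congrFun hzero) j)

open MeasureTheory in
/-- **Linear independence of Gaussian mean-derivatives.** If `(b_j, ν_j)`, `j ∈ [k]`, are
pairwise distinct pairs with `ν_j > 0`, and a finite linear combination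
`Σ_j Σ_{ω ≤ N_j} ξ_{j,ω} (∂^ω φ/∂b^ω)(y; b_j, ν_j)` vanishes for Lebesgue-a.e. `y`,
then all the coefficients `ξ_{j,ω}` vanish. -/
theorem gaussian_derivatives_linear_independent
    (k : ℕ) (hk : 1 ≤ k) (bm : Fin k → ℝ) (ν : Fin k → ℝ) (hν : ∀ j, 0 < ν j)
    (hdist : Function.Injective (fun j => (bm j, ν j)))
    (N : Fin k → ℕ) (ξ : Fin k → ℕ → ℝ)
    (h : ∀ᵐ y : ℝ,
      ∑ j : Fin k, ∑ ω ∈ Finset.range (N j + 1),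
        ξ j ω * iteratedDeriv ω (fun b' => gauss1 y b' (ν j)) (bm j) = 0) :
    ∀ j : Fin k, ∀ ω ≤ N j, ξ j ω = 0 :=
  gaussian_derivatives_linear_independent_general k bm ν hν hdist N ξ h
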